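/- arXiv:0911.4433 — 2 statements merged into one kernel-verified Lean document; each statement's English description precedes it below -/
import Mathlib

section
/- Let p > 3 be a prime. Then ∑_{1 ≤ i ≤ j ≤ k ≤ p-1} (−1)^i/(i·j·k) ≡ ∑_{1 ≤ i < j < k ≤ p-1} (−1)^i/(i·j·k) (mod p). -/
/-!
Reduce modulo `p`. The terms of the first sum missing from the second are those with
`i = j ≤ k` and those with `i < j = k`, so the difference is `A + B - T`, where
`A = ∑_{a ≤ b} (-1)^a/(a²b)`, `B = ∑_{a ≤ b} (-1)^a/(ab²)` and `T = ∑_a (-1)^a/a³`.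
Since `p` is odd, the reflection `a ↦ p - a` of all three indices fixes `(-1)^i/(ijk)` modulo `p`
and exchanges the triangle `a ≤ b` with its mirror image, so `2A` is the sum over the full square
plus `T`. That square sum factors as `(∑ (-1)^a/a²)(∑ 1/b)`, which vanishes since
`∑_{b=1}^{p-1} b^{-m} ≡ 0` for `0 < m < p - 1`; so `2A ≡ T`, and likewise `2B ≡ T` using `m = 2`,
which is where `p > 3` enters.
-/

open Finset

section Triangle

variable {M : Type*} [AddCommMonoid M]

theorem sum_Icc_triangle_add_sum_Icc_triangle_swap (n : ℕ) (g : ℕ → ℕ → M) :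
    ∑ b ∈ Icc 1 n, ∑ a ∈ Icc 1 b, g a b + ∑ b ∈ Icc 1 n, ∑ a ∈ Icc 1 b, g b a
      = ∑ a ∈ Icc 1 n, ∑ b ∈ Icc 1 n, g a b + ∑ a ∈ Icc 1 n, g a a := by
  induction n with
  | zero => simp
  | succ n ih =>
    simp only [sum_Icc_succ_top (by omega : 1 ≤ n + 1), sum_add_distrib]
    rw [add_add_add_comm, ih]
    abel

theorem sum_Icc_triangle_reflect (n : ℕ) (g : ℕ → ℕ → M) :
    ∑ b ∈ Icc 1 n, ∑ a ∈ Icc 1 b, g b a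
      = ∑ b ∈ Icc 1 n, ∑ a ∈ Icc 1 b, g (n + 1 - a) (n + 1 - b) := by
  rw [sum_sigma', sum_sigma']
  refine sum_nbij' (fun x => ⟨n + 1 - x.2, n + 1 - x.1⟩) (fun x => ⟨n + 1 - x.2, n + 1 - x.1⟩)
    ?_ ?_ ?_ ?_ ?_
  all_goals
    rintro ⟨b, a⟩ h
    simp only [mem_sigma, mem_Icc] at h ⊢
  · omega
  · omega
  · simp only [Sigma.mk.injEq]; refine ⟨by omega, ?_⟩; congr 1; omega
  · simp only [Sigma.mk.injEq]; refine ⟨by omega, ?_⟩; congr 1; omega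
  · congr 1 <;> omega

theorem two_nsmul_sum_Icc_triangle_of_reflect {n : ℕ} {g : ℕ → ℕ → M}
    (hg : ∀ a ∈ Icc 1 n, ∀ b ∈ Icc 1 n, g (n + 1 - a) (n + 1 - b) = g a b) :
    2 • ∑ b ∈ Icc 1 n, ∑ a ∈ Icc 1 b, g a b
      = ∑ a ∈ Icc 1 n, ∑ b ∈ Icc 1 n, g a b + ∑ a ∈ Icc 1 n, g a a := by
  rw [← sum_Icc_triangle_add_sum_Icc_triangle_swap, sum_Icc_triangle_reflect n g, two_nsmul]
  congr 1
  refine sum_congr rfl fun b hb => sum_congr rfl fun a ha => (hg a ?_ b hb).symm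
  simp only [mem_Icc] at ha hb ⊢
  omega

theorem sum_Icc_Icc_Icc_add_diag (n : ℕ) (t : ℕ → ℕ → ℕ → M) :
    ∑ k ∈ Icc 1 n, ∑ j ∈ Icc 1 k, ∑ i ∈ Icc 1 j, t i j k + ∑ k ∈ Icc 1 n, t k k k
      = ∑ k ∈ Icc 1 n, ∑ j ∈ Ico 1 k, ∑ i ∈ Ico 1 j, t i j k
        + ∑ k ∈ Icc 1 n, ∑ j ∈ Icc 1 k, t j j k + ∑ k ∈ Icc 1 n, ∑ i ∈ Icc 1 k, t i k k := by
  simp only [← sum_add_distrib]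
  refine sum_congr rfl fun k hk => ?_
  have hk : 1 ≤ k := (mem_Icc.mp hk).1
  have inner (j) (hj : j ∈ Ico 1 k) :
      ∑ i ∈ Icc 1 j, t i j k = ∑ i ∈ Ico 1 j, t i j k + t j j k :=
    (sum_Ico_add_eq_sum_Icc (mem_Ico.mp hj).1).symm
  rw [← sum_Ico_add_eq_sum_Icc hk, ← sum_Ico_add_eq_sum_Icc hk, ← sum_Ico_add_eq_sum_Icc hk,
    sum_congr rfl inner, sum_add_distrib]
  abel

end Triangle

theorem neg_one_pow_sub_of_odd {R : Type*} [Monoid R] [HasDistribNeg R] {p a : ℕ} (hp : Odd p)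
    (ha : a ≤ p) : (-1 : R) ^ (p - a) = -(-1) ^ a := by
  rcases Nat.even_or_odd a with ha' | ha'
  · rw [((Nat.odd_sub ha).mpr (iff_of_true hp ha')).neg_one_pow, ha'.neg_one_pow]
  · rw [(Nat.Odd.sub_odd hp ha').neg_one_pow, ha'.neg_one_pow, neg_neg]

def altHarmonicTerm (R : Type*) [DivisionRing R] (i j k : ℕ) : R :=
  (-1) ^ i / (i * j * k)

namespace ZMod

variable {p : ℕ} [Fact p.Prime]

theorem sum_Icc_eq_sum_univ {M : Type*} [AddCommMonoid M] {f : ZMod p → M} (hf : f 0 = 0) :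
    ∑ k ∈ Icc 1 (p - 1), f k = ∑ x, f x := by
  have hp := (Fact.out : p.Prime).pos
  rw [← sum_erase univ hf]
  refine sum_nbij' (fun k => (k : ZMod p)) val ?_ ?_ ?_ ?_ fun _ _ => rfl
  · intro k hk
    simp only [mem_Icc] at hk
    simp only [mem_erase, mem_univ, and_true, ne_eq, natCast_eq_zero_iff]
    exact Nat.not_dvd_of_pos_of_lt (by omega) (by omega)
  · intro x hx
    simp only [mem_erase, mem_univ, and_true] at hx
    have := val_lt x
    have := (val_ne_zero x).mpr hx
    simp only [mem_Icc]
    omega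
  · intro k hk
    simp only [mem_Icc] at hk
    exact val_cast_of_lt (by omega)
  · intro x _
    exact natCast_zmod_val x

theorem sum_Icc_inv_pow_eq_zero {m : ℕ} (hm0 : m ≠ 0) (hm : m < p - 1) :
    ∑ k ∈ Icc 1 (p - 1), ((k : ZMod p)⁻¹) ^ m = 0 := by
  rw [sum_Icc_eq_sum_univ (f := fun x => x⁻¹ ^ m) (by simp [hm0])]
  exact (Equiv.sum_comp (Equiv.inv (ZMod p)) (· ^ m)).trans
    (FiniteField.sum_pow_lt_card_sub_one (K := ZMod p) m (by rwa [card]))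

theorem two_mul_sum_Icc_triangle_of_reflect {g : ℕ → ℕ → ZMod p}
    (hg : ∀ a ∈ Icc 1 (p - 1), ∀ b ∈ Icc 1 (p - 1), g (p - a) (p - b) = g a b)
    (hfull : ∑ a ∈ Icc 1 (p - 1), ∑ b ∈ Icc 1 (p - 1), g a b = 0) :
    2 * ∑ b ∈ Icc 1 (p - 1), ∑ a ∈ Icc 1 b, g a b = ∑ a ∈ Icc 1 (p - 1), g a a := by
  have hp1 : p - 1 + 1 = p := Nat.sub_add_cancel (Fact.out : p.Prime).one_le
  rw [two_mul, ← two_nsmul, two_nsmul_sum_Icc_triangle_of_reflect (by rwa [hp1]), hfull,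
    zero_add]

theorem altHarmonicTerm_reflect (hp : Odd p) {a b c : ℕ} (ha : a ≤ p) (hb : b ≤ p) (hc : c ≤ p) :
    altHarmonicTerm (ZMod p) (p - a) (p - b) (p - c) = altHarmonicTerm (ZMod p) a b c := by
  simp only [altHarmonicTerm, neg_one_pow_sub_of_odd hp ha, Nat.cast_sub ha, Nat.cast_sub hb,
    Nat.cast_sub hc, natCast_self]
  ring

theorem sum_altHarmonicTerm_Icc_eq_Ico (hp3 : 3 < p) :
    ∑ k ∈ Icc 1 (p - 1), ∑ j ∈ Icc 1 k, ∑ i ∈ Icc 1 j, altHarmonicTerm (ZMod p) i j k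
      = ∑ k ∈ Icc 1 (p - 1), ∑ j ∈ Ico 1 k, ∑ i ∈ Ico 1 j, altHarmonicTerm (ZMod p) i j k := by
  set t := altHarmonicTerm (ZMod p)
  have hodd : Odd p := (Fact.out : p.Prime).odd_of_ne_two (by omega)
  have hmem {a : ℕ} (ha : a ∈ Icc 1 (p - 1)) : a ≤ p := by
    simp only [mem_Icc] at ha
    omega
  have h1 : 2 * ∑ b ∈ Icc 1 (p - 1), ∑ a ∈ Icc 1 b, t a a b = ∑ a ∈ Icc 1 (p - 1), t a a a := by
    refine two_mul_sum_Icc_triangle_of_reflect (fun a ha b hb =>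
      altHarmonicTerm_reflect hodd (hmem ha) (hmem ha) (hmem hb)) ?_
    calc ∑ a ∈ Icc 1 (p - 1), ∑ b ∈ Icc 1 (p - 1), t a a b
        = (∑ a ∈ Icc 1 (p - 1), (-1) ^ a / ((a : ZMod p) * a)) *
            ∑ b ∈ Icc 1 (p - 1), ((b : ZMod p)⁻¹) ^ 1 := by
          rw [sum_mul_sum]
          exact sum_congr rfl fun a _ => sum_congr rfl fun b _ => by
            simp only [t, altHarmonicTerm]; ring
      _ = 0 := by rw [sum_Icc_inv_pow_eq_zero one_ne_zero (by omega), mul_zero]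
  have h2 : 2 * ∑ b ∈ Icc 1 (p - 1), ∑ a ∈ Icc 1 b, t a b b = ∑ a ∈ Icc 1 (p - 1), t a a a := by
    refine two_mul_sum_Icc_triangle_of_reflect (fun a ha b hb =>
      altHarmonicTerm_reflect hodd (hmem ha) (hmem hb) (hmem hb)) ?_
    calc ∑ a ∈ Icc 1 (p - 1), ∑ b ∈ Icc 1 (p - 1), t a b b
        = (∑ a ∈ Icc 1 (p - 1), (-1) ^ a / (a : ZMod p)) *
            ∑ b ∈ Icc 1 (p - 1), ((b : ZMod p)⁻¹) ^ 2 := by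
          rw [sum_mul_sum]
          exact sum_congr rfl fun a _ => sum_congr rfl fun b _ => by
            simp only [t, altHarmonicTerm]; ring
      _ = 0 := by rw [sum_Icc_inv_pow_eq_zero two_ne_zero (by omega), mul_zero]
  have split := sum_Icc_Icc_Icc_add_diag (p - 1) t
  refine mul_left_cancel₀ (Ring.two_ne_zero (by rw [ringChar_zmod_n]; omega)) ?_
  linear_combination 2 * split + h1 + h2

end ZMod

/-- `(q : ZMod p)` is `q.num / q.den` computed in `ZMod p`, a junk value when `p ∣ q.den`, so the
cast is additive only on rationals whose denominator is prime to `p`. -/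
def ReducesModTo (p : ℕ) [Fact p.Prime] (q : ℚ) (z : ZMod p) : Prop :=
  ¬ p ∣ q.den ∧ (q : ZMod p) = z

namespace ReducesModTo

variable {p : ℕ} [hp : Fact p.Prime] {q r : ℚ} {a b : ZMod p}

theorem natCast_den_ne_zero (h : ReducesModTo p q a) : (q.den : ZMod p) ≠ 0 :=
  (ZMod.natCast_eq_zero_iff _ _).not.mpr h.1

theorem add (hq : ReducesModTo p q a) (hr : ReducesModTo p r b) :
    ReducesModTo p (q + r) (a + b) :=
  ⟨fun h => (hp.out.dvd_mul.mp (h.trans (Rat.add_den_dvd q r))).elim hq.1 hr.1, by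
    rw [Rat.cast_add_of_ne_zero hq.natCast_den_ne_zero hr.natCast_den_ne_zero, hq.2, hr.2]⟩

theorem sub (hq : ReducesModTo p q a) (hr : ReducesModTo p r b) :
    ReducesModTo p (q - r) (a - b) :=
  ⟨fun h => (hp.out.dvd_mul.mp (h.trans (Rat.sub_den_dvd q r))).elim hq.1 hr.1, by
    rw [Rat.cast_sub_of_ne_zero hq.natCast_den_ne_zero hr.natCast_den_ne_zero, hq.2, hr.2]⟩

theorem sum {ι : Type*} {s : Finset ι} {f : ι → ℚ} {g : ι → ZMod p}
    (h : ∀ i ∈ s, ReducesModTo p (f i) (g i)) :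
    ReducesModTo p (∑ i ∈ s, f i) (∑ i ∈ s, g i) := by
  classical
  induction s using Finset.induction_on with
  | empty => exact ⟨by simpa using hp.out.ne_one, by simp⟩
  | insert i s hi ih =>
    rw [sum_insert hi, sum_insert hi]
    exact (h i (mem_insert_self i s)).add (ih fun j hj => h j (mem_insert_of_mem hj))

theorem intCast_div_natCast (z : ℤ) {m : ℕ} (hm : ¬ p ∣ m) :
    ReducesModTo p (z / m) (z / m) := by
  have hm' : ReducesModTo p ((m : ℚ)⁻¹) ((m : ZMod p)⁻¹) :=
    ⟨by rwa [Rat.inv_natCast_den, if_neg (by rintro rfl; exact hm (dvd_zero p))],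
      Rat.cast_inv_nat m⟩
  have hz : ReducesModTo p (z : ℚ) (z : ZMod p) :=
    ⟨by simpa using hp.out.ne_one, Rat.cast_intCast z⟩
  refine ⟨fun h => (hp.out.dvd_mul.mp (h.trans (Rat.mul_den_dvd _ _))).elim hz.1 hm'.1, ?_⟩
  rw [div_eq_mul_inv, Rat.cast_mul_of_ne_zero hz.natCast_den_ne_zero hm'.natCast_den_ne_zero,
    hz.2, hm'.2, div_eq_mul_inv]

theorem intCast_dvd_num (h : ReducesModTo p q 0) : (p : ℤ) ∣ q.num := by
  have h2 := h.2
  rw [Rat.cast_def, div_eq_zero_iff, or_iff_left h.natCast_den_ne_zero] at h2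
  exact (ZMod.intCast_zmod_eq_zero_iff_dvd _ _).mp h2

end ReducesModTo

theorem reducesModTo_altHarmonicTerm {p : ℕ} [hp : Fact p.Prime] {i j k : ℕ} (hi : ¬ p ∣ i)
    (hj : ¬ p ∣ j) (hk : ¬ p ∣ k) :
    ReducesModTo p (altHarmonicTerm ℚ i j k) (altHarmonicTerm (ZMod p) i j k) := by
  have h := ReducesModTo.intCast_div_natCast ((-1) ^ i) (m := i * j * k)
    (by rw [hp.out.dvd_mul, hp.out.dvd_mul]; tauto)
  push_cast at h
  exact h

/-- For a prime `p > 3`,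
`∑_{1 ≤ i ≤ j ≤ k ≤ p-1} (-1)^i/(i·j·k) ≡ ∑_{1 ≤ i < j < k ≤ p-1} (-1)^i/(i·j·k)
(mod p)`. -/
theorem stmt_11 (p : ℕ) (hp : p.Prime) (hp3 : 3 < p) :
    (p : ℤ) ∣
      ((∑ k ∈ Finset.Icc 1 (p - 1), ∑ j ∈ Finset.Icc 1 k, ∑ i ∈ Finset.Icc 1 j,
          (-1 : ℚ) ^ i / ((i : ℚ) * (j : ℚ) * (k : ℚ)))
        - ∑ k ∈ Finset.Icc 1 (p - 1), ∑ j ∈ Finset.Ico 1 k, ∑ i ∈ Finset.Ico 1 j,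
            (-1 : ℚ) ^ i / ((i : ℚ) * (j : ℚ) * (k : ℚ))).num := by
  have := Fact.mk hp
  have hcop {a : ℕ} (h1 : 1 ≤ a) (h2 : a ≤ p - 1) : ¬ p ∣ a :=
    Nat.not_dvd_of_pos_of_lt h1 (by omega)
  have hterm {i j k : ℕ} (hi : 1 ≤ i) (hij : i ≤ j) (hjk : j ≤ k) (hk : k ∈ Icc 1 (p - 1)) :
      ReducesModTo p (altHarmonicTerm ℚ i j k) (altHarmonicTerm (ZMod p) i j k) := by
    rw [mem_Icc] at hk
    exact reducesModTo_altHarmonicTerm (hcop hi (by omega)) (hcop (by omega) (by omega))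
      (hcop (by omega) hk.2)
  refine ReducesModTo.intCast_dvd_num ?_
  rw [← sub_eq_zero.mpr (ZMod.sum_altHarmonicTerm_Icc_eq_Ico hp3)]
  refine ReducesModTo.sub (.sum fun k hk => .sum fun j hj => .sum fun i hi => ?_)
    (.sum fun k hk => .sum fun j hj => .sum fun i hi => ?_)
  · rw [mem_Icc] at hi hj
    exact hterm hi.1 hi.2 hj.2 hk
  · rw [mem_Ico] at hi hj
    exact hterm hi.1 hi.2.le hj.2.le hk
end

section
/- Let p > 3 be a prime and let m be a positive even integer with p > 3m + 1. Then ∑_{1 ≤ j < k ≤ p-1} (1/(j^{2m}·k^{m+1}) + 2/(j^{2m+1}·k^m)) ≡ C(3m,m)·B_{p-1-3m}/((m+1)·(2m+1)) (mod p). -/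
/-!
Write `H(a, b) = ∑_{1 ≤ j < k ≤ p-1} 1 / (j^a k^b)` and reduce modulo `p`. By Fermat,
`1 / (j^a k^b) ≡ j^(p-1-a) k^(p-1-b)`, and Faulhaber's formula turns the inner sum over `j` into a
polynomial in `k` whose coefficients involve Bernoulli numbers `B_i` with `i < p - 1`; these are
`p`-integral by von Staudt–Clausen. Summing over `k` kills every power of `k` except `k^(p-1)`, so
`H(a, b) ≡ (-1)^b C(a+b-1, b) B_{p-a-b} / a` because `C(p-a, b) ≡ (-1)^b C(a+b-1, b)`.
For `(a, b) = (2m, m+1)` and `(2m+1, m)` the two values combine, via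
`C(3m, m+1) (m+1) = C(3m, m) 2m`, into the right-hand side.
-/

open Finset

def doubleHarmonicSum (N a b : ℕ) : ℚ :=
  ∑ k ∈ Icc 1 N, ∑ j ∈ Ico 1 k, 1 / ((j : ℚ) ^ a * (k : ℚ) ^ b)

theorem neg_choose_succ_div_add_two_mul_choose_div {K : Type*} [Field K] (m : ℕ)
    (h2 : (2 : K) ≠ 0) (hm : (m : K) ≠ 0) (hm1 : (m + 1 : K) ≠ 0) (h2m1 : (2 * m + 1 : K) ≠ 0) :
    -((3 * m).choose (m + 1) : K) / (2 * m) + 2 * ((3 * m).choose m) / (2 * m + 1) =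
      (3 * m).choose m / ((m + 1) * (2 * m + 1)) := by
  have hchoose : ((3 * m).choose (m + 1) : K) * (m + 1) = (3 * m).choose m * (2 * m) := by
    rw [← Nat.cast_succ, ← Nat.cast_two, ← Nat.cast_mul, ← Nat.cast_mul, ← Nat.cast_mul,
      Nat.choose_succ_right_eq, show 3 * m - m = 2 * m by omega]
  field_simp
  linear_combination (-(2 * m + 1 : K)) * hchoose

section

variable {p : ℕ} [Fact p.Prime]

local notation "𝒪" => Valuation.integer (Rat.padicValuation p)

theorem Rat.inv_natCast_mem_padicValuation_integer {n : ℕ} (hn : ¬ p ∣ n) : (n : ℚ)⁻¹ ∈ 𝒪 := by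
  rw [Valuation.mem_integer_iff, Rat.padicValuation_le_one_iff, Rat.inv_natCast_den]
  split_ifs <;> simp_all

theorem bernoulli_mem_padicValuation_integer {t : ℕ} (ht : ¬ (p - 1) ∣ t) : bernoulli t ∈ 𝒪 := by
  have hp2 : p ≠ 2 := by rintro rfl; exact ht (one_dvd t)
  obtain ⟨k, rfl | rfl⟩ := t.even_or_odd'
  · obtain ⟨z, hz⟩ := Bernoulli.vonStaudt_clausen k
    rw [eq_sub_of_add_eq hz.symm]
    refine sub_mem (intCast_mem _ _) (sum_mem fun q hq => ?_)
    simp only [mem_filter] at hq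
    have hqp : q ≠ p := by rintro rfl; exact ht hq.2.2
    rw [one_div]
    exact Rat.inv_natCast_mem_padicValuation_integer fun hpq =>
      hqp ((Nat.prime_dvd_prime_iff_eq Fact.out hq.2.1).mp hpq).symm
  · rcases k.eq_zero_or_pos with rfl | hk
    · rw [bernoulli_one, neg_div, one_div]
      exact neg_mem (Rat.inv_natCast_mem_padicValuation_integer fun h =>
        hp2 ((Nat.prime_dvd_prime_iff_eq Fact.out Nat.prime_two).mp h))
    · rw [bernoulli_eq_zero_of_odd (odd_two_mul_add_one k) (by omega)]
      exact zero_mem _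

theorem bernoulli_mem_padicValuation_integer_of_lt {t : ℕ} (ht : t < p - 1) : bernoulli t ∈ 𝒪 := by
  rcases t.eq_zero_or_pos with rfl | ht0
  · simp [one_mem]
  · exact bernoulli_mem_padicValuation_integer fun h => (Nat.le_of_dvd ht0 h).not_gt ht

namespace ZMod

/-! `Rat.cast : ℚ → ZMod p` sends `x` to `x.num / x.den`; on `p`-integral rationals it is the
reduction modulo `p`, a ring homomorphism. -/

theorem natCast_den_ne_zero_of_mem {x : ℚ} (hx : x ∈ 𝒪) : (x.den : ZMod p) ≠ 0 := by
  rwa [Ne, natCast_eq_zero_iff, ← Rat.padicValuation_le_one_iff]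

theorem ratCast_add_of_mem {x y : ℚ} (hx : x ∈ 𝒪) (hy : y ∈ 𝒪) :
    ((x + y : ℚ) : ZMod p) = x + y :=
  Rat.cast_add_of_ne_zero (natCast_den_ne_zero_of_mem hx) (natCast_den_ne_zero_of_mem hy)

theorem ratCast_sub_of_mem {x y : ℚ} (hx : x ∈ 𝒪) (hy : y ∈ 𝒪) :
    ((x - y : ℚ) : ZMod p) = x - y :=
  Rat.cast_sub_of_ne_zero (natCast_den_ne_zero_of_mem hx) (natCast_den_ne_zero_of_mem hy)

theorem ratCast_mul_of_mem {x y : ℚ} (hx : x ∈ 𝒪) (hy : y ∈ 𝒪) :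
    ((x * y : ℚ) : ZMod p) = x * y :=
  Rat.cast_mul_of_ne_zero (natCast_den_ne_zero_of_mem hx) (natCast_den_ne_zero_of_mem hy)

theorem ratCast_sum_of_mem {ι : Type*} {s : Finset ι} {f : ι → ℚ} (hf : ∀ i ∈ s, f i ∈ 𝒪) :
    ((∑ i ∈ s, f i : ℚ) : ZMod p) = ∑ i ∈ s, (f i : ZMod p) := by
  classical
  induction s using Finset.induction_on with
  | empty => simp
  | insert i s hi ih =>
    have hs : ∀ j ∈ s, f j ∈ 𝒪 := fun j hj => hf j (mem_insert_of_mem hj)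
    rw [sum_insert hi, sum_insert hi, ratCast_add_of_mem (hf i (mem_insert_self i s))
      (sum_mem hs), ih hs]

theorem intCast_dvd_num_of_ratCast_eq_zero {x : ℚ} (hx : x ∈ 𝒪) (h : (x : ZMod p) = 0) :
    (p : ℤ) ∣ x.num := by
  rw [Rat.cast_def, div_eq_zero_iff, or_iff_left (natCast_den_ne_zero_of_mem hx)] at h
  exact (intCast_zmod_eq_zero_iff_dvd _ _).mp h

theorem natCast_ne_zero_of_mem_Icc {k : ℕ} (hk : k ∈ Icc 1 (p - 1)) : (k : ZMod p) ≠ 0 := by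
  rw [mem_Icc] at hk
  rw [Ne, natCast_eq_zero_iff]
  exact Nat.not_dvd_of_pos_of_lt hk.1 (by omega)

theorem inv_pow_eq_pow_sub {x : ZMod p} (hx : x ≠ 0) {a : ℕ} (ha : a ≤ p - 1) :
    (x ^ a)⁻¹ = x ^ (p - 1 - a) :=
  inv_eq_of_mul_eq_one_right <| by
    rw [← pow_add, Nat.add_sub_cancel' ha, pow_card_sub_one_eq_one hx]

theorem sum_Icc_pow (e : ℕ) :
    ∑ k ∈ Icc 1 (p - 1), (k : ZMod p) ^ e = if p - 1 ∣ e then -1 else 0 := by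
  classical
  have h := FiniteField.sum_pow_units (ZMod p) e
  rw [ZMod.card] at h
  rw [← h]
  refine sum_bij' (fun k hk => Units.mk0 (k : ZMod p) (natCast_ne_zero_of_mem_Icc hk))
    (fun u _ => (u : ZMod p).val) (fun _ _ => mem_univ _) (fun u _ => ?_) (fun k hk => ?_)
    (fun u _ => Units.ext (natCast_zmod_val _)) (fun _ _ => rfl)
  · have := val_lt (u : ZMod p)
    have := (val_ne_zero (u : ZMod p)).mpr u.ne_zero
    rw [mem_Icc]; omega
  · rw [mem_Icc] at hk
    exact val_cast_of_lt (by omega)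

theorem natCast_choose_sub {a b : ℕ} (ha : a ≤ p) (hb : b < p) :
    ((p - a).choose b : ZMod p) = (-1) ^ b * (a + b - 1).choose b := by
  have hfac : (b.factorial : ZMod p) ≠ 0 := by
    rw [Ne, natCast_eq_zero_iff, Nat.Prime.dvd_factorial Fact.out]; omega
  refine mul_left_cancel₀ hfac ?_
  have hasc := ascPochhammer_eval_neg_eq_descPochhammer (ZMod p) (-(a : ZMod p)) b
  have hsub : ((p - a : ℕ) : ZMod p) = -a := by rw [Nat.cast_sub ha, natCast_self, zero_sub]
  rw [neg_neg, ← Nat.cast_ascFactorial, Nat.ascFactorial_eq_factorial_mul_choose', ← hsub,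
    descPochhammer_eval_eq_descFactorial, Nat.descFactorial_eq_factorial_mul_choose] at hasc
  push_cast at hasc
  rw [mul_left_comm, hasc, ← mul_assoc, ← mul_pow]
  simp

theorem sum_range_pow_eq_bernoulli (k : ℕ) {n : ℕ} (hn : n + 1 < p) :
    ∑ j ∈ range k, (j : ZMod p) ^ n =
      ∑ i ∈ range (n + 1), (bernoulli i : ZMod p) * (n + 1).choose i * k ^ (n + 1 - i) / (n + 1) := by
  have hB : ∀ i ∈ range (n + 1), bernoulli i ∈ 𝒪 := fun i hi =>
    bernoulli_mem_padicValuation_integer_of_lt (by rw [mem_range] at hi; omega)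
  have hinv := Rat.inv_natCast_mem_padicValuation_integer (Nat.not_dvd_of_pos_of_lt n.succ_pos hn)
  have hterm : ∀ i ∈ range (n + 1),
      bernoulli i * ((n + 1).choose i) * (k : ℚ) ^ (n + 1 - i) / (n + 1) =
        bernoulli i * ((n + 1).choose i * k ^ (n + 1 - i) : ℕ) * ((n + 1 : ℕ) : ℚ)⁻¹ := by
    intro i _; push_cast; ring
  calc ∑ j ∈ range k, (j : ZMod p) ^ n = ((∑ j ∈ range k, (j : ℚ) ^ n : ℚ) : ZMod p) := by
        simp only [← Nat.cast_pow, ← Nat.cast_sum, Rat.cast_natCast]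
    _ = _ := by
        rw [sum_range_pow, sum_congr rfl hterm,
          ratCast_sum_of_mem fun i hi => mul_mem (mul_mem (hB i hi) (natCast_mem _ _)) hinv]
        refine sum_congr rfl fun i hi => ?_
        rw [ratCast_mul_of_mem (mul_mem (hB i hi) (natCast_mem _ _)) hinv,
          ratCast_mul_of_mem (hB i hi) (natCast_mem _ _), Rat.cast_inv_nat, Rat.cast_natCast]
        push_cast; ring

theorem sum_Ico_inv_pow_mul_pow {a b n k : ℕ} (ha : 0 < a) (hn : 0 < n) (hnap : n + a + 1 = p)
    (hb : b ≤ p - 1) (hk : k ∈ Icc 1 (p - 1)) :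
    ∑ j ∈ Ico 1 k, ((j : ZMod p) ^ a * (k : ZMod p) ^ b)⁻¹ =
      ∑ i ∈ range (n + 1), (bernoulli i : ZMod p) * (n + 1).choose i / (n + 1) *
        (k : ZMod p) ^ (n + 1 - i + (p - 1 - b)) :=
  calc ∑ j ∈ Ico 1 k, ((j : ZMod p) ^ a * (k : ZMod p) ^ b)⁻¹
      = (∑ j ∈ range k, (j : ZMod p) ^ n) * (k : ZMod p) ^ (p - 1 - b) := by
        rw [range_eq_Ico, sum_eq_sum_Ico_succ_bot (mem_Icc.mp hk).1, Nat.cast_zero,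
          zero_pow hn.ne', zero_add, sum_mul]
        refine sum_congr rfl fun j hj => ?_
        have hj : j ∈ Icc 1 (p - 1) := by simp only [mem_Ico, mem_Icc] at hj hk ⊢; omega
        rw [mul_inv, inv_pow_eq_pow_sub (natCast_ne_zero_of_mem_Icc hj) (by omega),
          inv_pow_eq_pow_sub (natCast_ne_zero_of_mem_Icc hk) hb, show p - 1 - a = n by omega]
    _ = _ := by
        rw [sum_range_pow_eq_bernoulli k (by omega), sum_mul]
        refine sum_congr rfl fun i _ => ?_
        rw [pow_add]; ring

theorem sum_Icc_sum_Ico_inv_pow_mul_pow {a b : ℕ} (ha : 0 < a) (hb : 0 < b) (hab : a + b < p) :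
    ∑ k ∈ Icc 1 (p - 1), ∑ j ∈ Ico 1 k, ((j : ZMod p) ^ a * (k : ZMod p) ^ b)⁻¹ =
      (-1) ^ b * (a + b - 1).choose b * (bernoulli (p - a - b) : ZMod p) / a := by
  set n := p - 1 - a with hn
  set c : ℕ → ZMod p := fun i => (bernoulli i : ZMod p) * (n + 1).choose i / (n + 1) with hc
  -- the exponents lie in `[1, 2(p-1))`, so only `i = p - a - b` gives exponent `p - 1`
  have hexp : ∀ i ∈ range (n + 1), (p - 1 ∣ n + 1 - i + (p - 1 - b) ↔ i = p - a - b) := by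
    intro i hi
    rw [mem_range] at hi
    constructor
    · rintro ⟨q, hq⟩
      rcases q with _ | _ | q
      · omega
      · omega
      · have := Nat.mul_le_mul_left (p - 1) (show 2 ≤ q + 1 + 1 by omega)
        omega
    · rintro rfl; exact ⟨1, by omega⟩
  rw [sum_congr rfl fun k hk => sum_Ico_inv_pow_mul_pow (n := n) ha (by omega) (by omega) (by omega) hk,
    sum_comm]
  simp_rw [← mul_sum, sum_Icc_pow]
  rw [sum_congr rfl fun i hi => by rw [if_congr (hexp i hi) rfl rfl]]
  simp only [mul_ite, mul_neg, mul_one, mul_zero]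
  rw [sum_ite_eq' (range (n + 1)) (p - a - b) (fun i => -c i), if_pos (by rw [mem_range]; omega)]
  have hchoose : ((n + 1).choose (p - a - b) : ZMod p) = (-1) ^ b * (a + b - 1).choose b := by
    rw [show n + 1 = p - a by omega, Nat.choose_symm_of_eq_add (show p - a = p - a - b + b by omega),
      natCast_choose_sub (by omega) (by omega)]
  have hna : (n + 1 : ZMod p) = -a := by
    rw [← Nat.cast_add_one, show n + 1 = p - a by omega, Nat.cast_sub (by omega), natCast_self,
      zero_sub]
  have ha' : (a : ZMod p) ≠ 0 := natCast_ne_zero_of_mem_Icc (by rw [mem_Icc]; omega)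
  simp only [hc, hchoose, hna]
  field_simp

end ZMod

theorem one_div_pow_mul_pow_mem {a b j k : ℕ} (hjk : j ∈ Ico 1 k) (hk : k ∈ Icc 1 (p - 1)) :
    1 / ((j : ℚ) ^ a * (k : ℚ) ^ b) ∈ 𝒪 := by
  have hj : j ∈ Icc 1 (p - 1) := by simp only [mem_Ico, mem_Icc] at hjk hk ⊢; omega
  rw [one_div, ← Nat.cast_pow, ← Nat.cast_pow, ← Nat.cast_mul]
  refine Rat.inv_natCast_mem_padicValuation_integer fun h => ?_
  rw [← ZMod.natCast_eq_zero_iff] at h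
  push_cast at h
  simp [ZMod.natCast_ne_zero_of_mem_Icc hj, ZMod.natCast_ne_zero_of_mem_Icc hk] at h

theorem doubleHarmonicSum_mem (a b : ℕ) : doubleHarmonicSum (p - 1) a b ∈ 𝒪 :=
  sum_mem fun _ hk => sum_mem fun _ hj => one_div_pow_mul_pow_mem hj hk

theorem ratCast_doubleHarmonicSum {a b : ℕ} (ha : 0 < a) (hb : 0 < b) (hab : a + b < p) :
    (doubleHarmonicSum (p - 1) a b : ZMod p) =
      (-1) ^ b * (a + b - 1).choose b * (bernoulli (p - a - b) : ZMod p) / a := by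
  have hmem : ∀ k ∈ Icc 1 (p - 1), ∀ j ∈ Ico 1 k, 1 / ((j : ℚ) ^ a * (k : ℚ) ^ b) ∈ 𝒪 :=
    fun _ hk _ hj => one_div_pow_mul_pow_mem hj hk
  rw [← ZMod.sum_Icc_sum_Ico_inv_pow_mul_pow ha hb hab, doubleHarmonicSum,
    ZMod.ratCast_sum_of_mem fun k hk => sum_mem (hmem k hk)]
  refine sum_congr rfl fun k hk => ?_
  rw [ZMod.ratCast_sum_of_mem (hmem k hk)]
  refine sum_congr rfl fun j _ => ?_
  rw [one_div, ← Nat.cast_pow, ← Nat.cast_pow, ← Nat.cast_mul, Rat.cast_inv_nat]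
  push_cast; rfl

theorem ratCast_doubleHarmonicSum_add_two_mul {m : ℕ} (hm : 0 < m) (hme : Even m)
    (hpm : 3 * m + 1 < p) :
    ((doubleHarmonicSum (p - 1) (2 * m) (m + 1) + 2 * doubleHarmonicSum (p - 1) (2 * m + 1) m : ℚ)
      : ZMod p) = (3 * m).choose m * (bernoulli (p - 1 - 3 * m) : ZMod p) / ((m + 1) * (2 * m + 1)) := by
  have hunit : ∀ n, 0 < n → n < p → (n : ZMod p) ≠ 0 := fun n h0 hn =>
    ZMod.natCast_ne_zero_of_mem_Icc (mem_Icc.mpr ⟨h0, by omega⟩)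
  have h2 := hunit 2 (by omega) (by omega)
  have hm0 := hunit m hm (by omega)
  have hm1 := hunit (m + 1) (by omega) (by omega)
  have h2m1 := hunit (2 * m + 1) (by omega) (by omega)
  push_cast at h2 hm1 h2m1
  have hH2 := doubleHarmonicSum_mem (p := p) (2 * m + 1) m
  rw [ZMod.ratCast_add_of_mem (doubleHarmonicSum_mem _ _) (mul_mem (ofNat_mem _ 2) hH2),
    ZMod.ratCast_mul_of_mem (ofNat_mem _ 2) hH2, Rat.cast_ofNat,
    ratCast_doubleHarmonicSum (by omega) (by omega) (by omega),
    ratCast_doubleHarmonicSum (by omega) (by omega) (by omega),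
    show p - 2 * m - (m + 1) = p - 1 - 3 * m by omega,
    show p - (2 * m + 1) - m = p - 1 - 3 * m by omega,
    show 2 * m + (m + 1) - 1 = 3 * m by omega, show 2 * m + 1 + m - 1 = 3 * m by omega,
    (Even.add_one hme).neg_one_pow, hme.neg_one_pow]
  push_cast
  linear_combination (bernoulli (p - 1 - 3 * m) : ZMod p) *
    neg_choose_succ_div_add_two_mul_choose_div m h2 hm0 hm1 h2m1

end

theorem stmt_16_general (p : ℕ) (hp : p.Prime) (m : ℕ) (hm : 0 < m)
    (hme : Even m) (hpm : 3 * m + 1 < p) :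
    (p : ℤ) ∣
      ((∑ k ∈ Finset.Icc 1 (p - 1), ∑ j ∈ Finset.Ico 1 k,
          (1 / ((j : ℚ) ^ (2 * m) * (k : ℚ) ^ (m + 1))
            + 2 / ((j : ℚ) ^ (2 * m + 1) * (k : ℚ) ^ m)))
        - ((3 * m).choose m : ℚ) * bernoulli (p - 1 - 3 * m)
            / ((m + 1) * (2 * m + 1))).num := by
  have := Fact.mk hp
  have hsum : ∑ k ∈ Icc 1 (p - 1), ∑ j ∈ Ico 1 k, (1 / ((j : ℚ) ^ (2 * m) * (k : ℚ) ^ (m + 1)) +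
      2 / ((j : ℚ) ^ (2 * m + 1) * (k : ℚ) ^ m)) =
      doubleHarmonicSum (p - 1) (2 * m) (m + 1) + 2 * doubleHarmonicSum (p - 1) (2 * m + 1) m := by
    simp only [doubleHarmonicSum, mul_sum, ← sum_add_distrib, mul_one_div]
  have hden : ((m : ℚ) + 1) * (2 * m + 1) = ((m + 1) * (2 * m + 1) : ℕ) := by push_cast; ring
  have hH := add_mem (doubleHarmonicSum_mem (p := p) (2 * m) (m + 1))
    (mul_mem (ofNat_mem _ 2) (doubleHarmonicSum_mem (2 * m + 1) m))
  have hB := bernoulli_mem_padicValuation_integer_of_lt (p := p) (t := p - 1 - 3 * m) (by omega)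
  have hinv := Rat.inv_natCast_mem_padicValuation_integer (p := p)
    (n := (m + 1) * (2 * m + 1)) fun h => by
      rcases (Nat.Prime.dvd_mul hp).mp h with h | h <;>
        exact Nat.not_dvd_of_pos_of_lt (by omega) (by omega) h
  have hT := mul_mem (mul_mem (natCast_mem _ ((3 * m).choose m)) hB) hinv
  rw [hsum, hden, div_eq_mul_inv]
  refine ZMod.intCast_dvd_num_of_ratCast_eq_zero (sub_mem hH hT) ?_
  rw [ZMod.ratCast_sub_of_mem hH hT, ratCast_doubleHarmonicSum_add_two_mul hm hme hpm,
    ZMod.ratCast_mul_of_mem (mul_mem (natCast_mem _ _) hB) hinv,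
    ZMod.ratCast_mul_of_mem (natCast_mem _ _) hB, Rat.cast_inv_nat, Rat.cast_natCast, sub_eq_zero]
  push_cast
  ring

/-- For a prime `p > 3` and a positive even integer `m` with
`p > 3m + 1`, we have
`∑_{1 ≤ j < k ≤ p-1} (1/(j^{2m}·k^{m+1}) + 2/(j^{2m+1}·k^m))
  ≡ C(3m,m)·B_{p-1-3m}/((m+1)·(2m+1)) (mod p)`. -/
theorem stmt_16 (p : ℕ) (hp : p.Prime) (hp3 : 3 < p) (m : ℕ) (hm : 0 < m)
    (hme : Even m) (hpm : 3 * m + 1 < p) :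
    (p : ℤ) ∣
      ((∑ k ∈ Finset.Icc 1 (p - 1), ∑ j ∈ Finset.Ico 1 k,
          (1 / ((j : ℚ) ^ (2 * m) * (k : ℚ) ^ (m + 1))
            + 2 / ((j : ℚ) ^ (2 * m + 1) * (k : ℚ) ^ m)))
        - ((3 * m).choose m : ℚ) * bernoulli (p - 1 - 3 * m)
            / ((m + 1) * (2 * m + 1))).num :=
  stmt_16_general p hp m hm hme hpm
end
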